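/- arXiv:1505.04821 — 5 statements merged into one kernel-verified Lean document; each statement's English description precedes it below -/
import Mathlib

section
/- Let Ω be a convex body in ℝ^{m+1} with 0 in its interior, having radial function ρ and support function h. Setting φ = log(1/h) and ψ = log ρ, the pair (φ, ψ) satisfies ψ(x) = min_{n ∈ S^m} (c(n,x) − φ(n)) and φ(n) = min_{x ∈ S^m} (c(n,x) − ψ(x)) for all x, n in S^m, where c(n,x) = −log⟨n,x⟩ when ⟨n,x⟩ > 0 and +∞ otherwise. -/
open MeasureTheory Metric Set Real
open scoped ENNReal

noncomputable section

abbrev Euc (m : ℕ) : Type := EuclideanSpace ℝ (Fin (m + 1))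

abbrev Sph (m : ℕ) : Type := Metric.sphere (0 : Euc m) 1

/-- geodesic distance on the sphere -/
def gdist {m : ℕ} (n x : Sph m) : ℝ :=
  Real.arccos (inner ℝ (n : Euc m) (x : Euc m))

/-- the logarithmic cost, with values in `[0,∞]` -/
def cost {m : ℕ} (n x : Sph m) : ℝ≥0∞ :=
  if 0 < (inner ℝ (n : Euc m) (x : Euc m) : ℝ) then
    ENNReal.ofReal (-Real.log (inner ℝ (n : Euc m) (x : Euc m))) else ∞

/-- the uniform probability measure on the sphere -/
def unif (m : ℕ) : Measure (Sph m) :=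
  ((volume : Measure (Euc m)).toSphere Set.univ)⁻¹ • (volume : Measure (Euc m)).toSphere

/-- the radial function of a set with respect to the origin -/
def radial {m : ℕ} (Ω : Set (Euc m)) (x : Sph m) : ℝ :=
  sSup {s : ℝ | 0 ≤ s ∧ s • (x : Euc m) ∈ Ω}

/-- the Euclidean cone generated by a subset of the sphere -/
def cone {m : ℕ} (A : Set (Sph m)) : Set (Euc m) :=
  {y | ∃ r : ℝ, 0 ≤ r ∧ ∃ x ∈ A, y = r • (x : Euc m)}

/-- a subset of the sphere is spherically convex if the cone it generates is convex -/
def SphConvex {m : ℕ} (A : Set (Sph m)) : Prop := Convex ℝ (cone A)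

/-- open `r`-neighbourhood for the geodesic distance -/
def nbhd {m : ℕ} (V : Set (Sph m)) (r : ℝ) : Set (Sph m) :=
  {y | ∃ x ∈ V, gdist y x < r}

/-- the spherical polar set -/
def spolar {m : ℕ} (ω : Set (Sph m)) : Set (Sph m) :=
  {y | ∀ x ∈ ω, (inner ℝ (y : Euc m) (x : Euc m) : ℝ) ≤ 0}

/-- the support function of a star-shaped set -/
def suppFn {m : ℕ} (F : Set (Euc m)) (n : Sph m) : ℝ :=
  ⨆ x : Sph m, radial F x * (inner ℝ (x : Euc m) (n : Euc m) : ℝ)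

/-- the polar set in Euclidean space -/
def polar {m : ℕ} (F : Set (Euc m)) : Set (Euc m) :=
  {n | ∀ x ∈ F, (inner ℝ x n : ℝ) ≤ 1}

/-- the logarithmic cost, with values in `ℝ ∪ {±∞}` -/
def costE {m : ℕ} (n x : Sph m) : EReal :=
  if 0 < (inner ℝ (n : Euc m) (x : Euc m) : ℝ) then
    ((-Real.log (inner ℝ (n : Euc m) (x : Euc m)) : ℝ) : EReal) else ⊤

/-!
Since `ρ(x) x ∈ Ω` and `h(n) = max_Ω ⟨·, n⟩`, we have `ρ(x) ⟨x, n⟩ ≤ h(n)` for all `x, n`, which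
after taking logarithms is `φ(n) + ψ(x) ≤ c(n, x)`. Equality is attained on both sides: for a fixed direction
`n`, at the radial point where the linear form `⟨·, n⟩` is maximised on the compact set `Ω`; for a
fixed `x`, at an outer normal of a supporting hyperplane of `Ω` through the boundary point
`ρ(x) x`, given by Hahn–Banach.
-/

open scoped RealInnerProductSpace Topology

section General

theorem exists_gt_smul_mem_of_smul_mem_interior {E : Type*} [AddCommGroup E] [Module ℝ E]
    [TopologicalSpace E] [ContinuousSMul ℝ E] {s : Set E} {x : E} {r : ℝ}
    (h : r • x ∈ interior s) : ∃ t > r, t • x ∈ s := by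
  have hnhds : ∀ᶠ t in 𝓝 r, t • x ∈ interior s :=
    (continuous_id.smul continuous_const).continuousAt.preimage_mem_nhds
      (isOpen_interior.mem_nhds h)
  obtain ⟨t, ht, hgt⟩ := ((hnhds.filter_mono nhdsWithin_le_nhds).and
    (self_mem_nhdsWithin : Ioi r ∈ 𝓝[>] r)).exists
  exact ⟨t, hgt, interior_subset ht⟩

variable {E : Type*} [NormedAddCommGroup E] [InnerProductSpace ℝ E]

theorem exists_mem_sphere_eq_norm_smul {y : E} (hy : y ≠ 0) :
    ∃ x ∈ sphere (0 : E) 1, y = ‖y‖ • x :=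
  ⟨‖y‖⁻¹ • y, by simpa using norm_smul_inv_norm (𝕜 := ℝ) hy,
    (smul_inv_smul₀ (norm_ne_zero_iff.2 hy) y).symm⟩

theorem Convex.exists_mem_sphere_inner_le_of_notMem_interior [CompleteSpace E] {A : Set E}
    {p : E} (hA : Convex ℝ A) (hp : p ∉ interior A) (hA' : (interior A).Nonempty) :
    ∃ n ∈ sphere (0 : E) 1, ∀ a ∈ A, ⟪a, n⟫ ≤ ⟪p, n⟫ := by
  obtain ⟨f, hf0, hf⟩ := geometric_hahn_banach_of_nonempty_interior_point hA hp hA'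
  set v := (InnerProductSpace.toDual ℝ E).symm f
  have hv : ∀ y, ⟪v, y⟫ = f y := fun y => InnerProductSpace.toDual_symm_apply
  have hv0 : v ≠ 0 := by simpa [v] using hf0
  obtain ⟨n, hn, hvn⟩ := exists_mem_sphere_eq_norm_smul hv0
  refine ⟨n, hn, fun a ha => ?_⟩
  have hfa := hf a ha
  rw [← hv, ← hv, hvn, real_inner_smul_left, real_inner_smul_left] at hfa
  rw [real_inner_comm n a, real_inner_comm n p]
  exact le_of_mul_le_mul_left hfa (norm_pos_iff.2 hv0)

end General

section RadialSupport

variable {m : ℕ} {Ω : Set (Euc m)}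

instance : Nonempty (Sph m) :=
  ⟨⟨EuclideanSpace.single 0 1, by simp⟩⟩

theorem bddAbove_radial_set (hcomp : IsCompact Ω) (x : Sph m) :
    BddAbove {s : ℝ | 0 ≤ s ∧ s • (x : Euc m) ∈ Ω} := by
  obtain ⟨R, hR⟩ := isBounded_iff_forall_norm_le.1 hcomp.isBounded
  refine ⟨R, fun s hs => ?_⟩
  simpa [norm_smul, norm_eq_of_mem_sphere, abs_of_nonneg hs.1] using hR _ hs.2

theorem le_radial (hcomp : IsCompact Ω) {x : Sph m} {s : ℝ} (hs : 0 ≤ s)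
    (hmem : s • (x : Euc m) ∈ Ω) : s ≤ radial Ω x :=
  le_csSup (bddAbove_radial_set hcomp x) ⟨hs, hmem⟩

theorem radial_smul_mem (hcomp : IsCompact Ω) (h0 : (0 : Euc m) ∈ Ω) (x : Sph m) :
    radial Ω x • (x : Euc m) ∈ Ω := by
  have hclosed : IsClosed {s : ℝ | 0 ≤ s ∧ s • (x : Euc m) ∈ Ω} :=
    isClosed_Ici.inter (hcomp.isClosed.preimage (continuous_id.smul continuous_const))
  exact (hclosed.csSup_mem ⟨0, le_rfl, by simpa using h0⟩ (bddAbove_radial_set hcomp x)).2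

theorem radial_pos (hcomp : IsCompact Ω) (hint : (0 : Euc m) ∈ interior Ω) (x : Sph m) :
    0 < radial Ω x := by
  obtain ⟨t, ht, hmem⟩ := exists_gt_smul_mem_of_smul_mem_interior
    (x := (x : Euc m)) (r := 0) (by simpa using hint)
  exact ht.trans_le (le_radial hcomp ht.le hmem)

theorem radial_smul_notMem_interior (hcomp : IsCompact Ω) (x : Sph m) :
    radial Ω x • (x : Euc m) ∉ interior Ω := fun h => by
  obtain ⟨t, ht, hmem⟩ := exists_gt_smul_mem_of_smul_mem_interior h
  have hρ : 0 ≤ radial Ω x := Real.sSup_nonneg fun s hs => hs.1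
  exact ht.not_ge (le_radial hcomp (hρ.trans ht.le) hmem)

theorem radial_mul_inner_le_suppFn (hcomp : IsCompact Ω) (h0 : (0 : Euc m) ∈ Ω) (x n : Sph m) :
    radial Ω x * ⟪(x : Euc m), n⟫ ≤ suppFn Ω n := by
  have hbdd : BddAbove ((fun a : Euc m => ⟪a, (n : Euc m)⟫) '' Ω) :=
    hcomp.bddAbove_image (by fun_prop)
  refine le_ciSup (f := fun y : Sph m => radial Ω y * ⟪(y : Euc m), n⟫) (hbdd.mono ?_) x
  rintro _ ⟨y, rfl⟩
  exact ⟨_, radial_smul_mem hcomp h0 y, real_inner_smul_left _ _ _⟩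

theorem radial_mul_inner_eq_suppFn_of_forall_le (hcomp : IsCompact Ω) (h0 : (0 : Euc m) ∈ Ω)
    {x n : Sph m} (h : ∀ a ∈ Ω, ⟪a, (n : Euc m)⟫ ≤ radial Ω x * ⟪(x : Euc m), n⟫) :
    radial Ω x * ⟪(x : Euc m), n⟫ = suppFn Ω n :=
  (radial_mul_inner_le_suppFn hcomp h0 x n).antisymm <| ciSup_le fun y => by
    rw [← real_inner_smul_left]
    exact h _ (radial_smul_mem hcomp h0 y)

theorem suppFn_pos (hcomp : IsCompact Ω) (hint : (0 : Euc m) ∈ interior Ω) (n : Sph m) :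
    0 < suppFn Ω n := by
  have h := radial_mul_inner_le_suppFn hcomp (interior_subset hint) n n
  rw [inner_self_eq_one_of_norm_eq_one (norm_eq_of_mem_sphere n), mul_one] at h
  exact (radial_pos hcomp hint n).trans_le h

theorem exists_supporting_normal (hconv : Convex ℝ Ω) (hcomp : IsCompact Ω)
    (hint : (0 : Euc m) ∈ interior Ω) (x : Sph m) :
    ∃ n : Sph m, radial Ω x * ⟪(x : Euc m), n⟫ = suppFn Ω n := by
  obtain ⟨n, hn, hmax⟩ := hconv.exists_mem_sphere_inner_le_of_notMem_interior
    (radial_smul_notMem_interior hcomp x) ⟨0, hint⟩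
  refine ⟨⟨n, hn⟩, radial_mul_inner_eq_suppFn_of_forall_le hcomp (interior_subset hint) ?_⟩
  simpa only [real_inner_smul_left] using hmax

theorem exists_supported_point (hcomp : IsCompact Ω) (hint : (0 : Euc m) ∈ interior Ω)
    (n : Sph m) : ∃ x : Sph m, radial Ω x * ⟪(x : Euc m), n⟫ = suppFn Ω n := by
  have h0 : (0 : Euc m) ∈ Ω := interior_subset hint
  obtain ⟨y, hy, hmax⟩ := hcomp.exists_isMaxOn (f := fun a : Euc m => ⟪a, (n : Euc m)⟫)
    ⟨0, h0⟩ (by fun_prop)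
  have hpos : 0 < ⟪y, (n : Euc m)⟫ := by
    have h : ⟪radial Ω n • (n : Euc m), n⟫ ≤ ⟪y, (n : Euc m)⟫ :=
      hmax (radial_smul_mem hcomp h0 n)
    rw [real_inner_smul_left,
      inner_self_eq_one_of_norm_eq_one (norm_eq_of_mem_sphere n), mul_one] at h
    exact (radial_pos hcomp hint n).trans_le h
  have hy0 : y ≠ 0 := by rintro rfl; simp at hpos
  obtain ⟨x, hx, hyx⟩ := exists_mem_sphere_eq_norm_smul hy0
  refine ⟨⟨x, hx⟩, radial_mul_inner_eq_suppFn_of_forall_le hcomp h0 fun a ha => ?_⟩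
  have hxn : 0 ≤ ⟪x, (n : Euc m)⟫ := by
    rw [hyx, real_inner_smul_left] at hpos
    exact (pos_of_mul_pos_right hpos (norm_nonneg y)).le
  calc ⟪a, (n : Euc m)⟫ ≤ ⟪y, (n : Euc m)⟫ := hmax ha
    _ = ‖y‖ * ⟪x, (n : Euc m)⟫ := by
      conv_lhs => rw [hyx]
      exact real_inner_smul_left _ _ _
    _ ≤ radial Ω ⟨x, hx⟩ * ⟪x, (n : Euc m)⟫ := by
      gcongr
      exact le_radial hcomp (norm_nonneg y) (hyx ▸ hy)

end RadialSupport

theorem log_one_div_add_log_le {H r i : ℝ} (hr : 0 < r) (hi : 0 < i) (h : r * i ≤ H) :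
    log (1 / H) + log r ≤ -log i := by
  have hlog := log_le_log (mul_pos hr hi) h
  rw [log_mul hr.ne' hi.ne'] at hlog
  rw [one_div, log_inv]
  linarith

theorem log_one_div_add_log_eq {H r i : ℝ} (hr : 0 < r) (hi : 0 < i) (h : r * i = H) :
    log (1 / H) + log r = -log i := by
  rw [one_div, log_inv, ← h, log_mul hr.ne' hi.ne']
  ring

section Cost

variable {m : ℕ}

theorem coe_le_costE_sub {n x : Sph m} {a b : ℝ}
    (h : 0 < ⟪(n : Euc m), x⟫ → a + b ≤ -log ⟪(n : Euc m), x⟫) :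
    (b : EReal) ≤ costE n x - a := by
  unfold costE
  split_ifs with hpos
  · rw [← EReal.coe_sub, EReal.coe_le_coe_iff]
    linarith [h hpos]
  · rw [EReal.top_sub_coe]
    exact le_top

theorem costE_sub_eq {n x : Sph m} {a b : ℝ} (hpos : 0 < ⟪(n : Euc m), x⟫)
    (h : a + b = -log ⟪(n : Euc m), x⟫) : costE n x - a = b := by
  rw [costE, if_pos hpos, ← EReal.coe_sub, EReal.coe_eq_coe_iff]
  linarith

end Cost

/-- `φ = log (1/h)` and `ψ = log ρ` are `c`-transforms of each other,
the minima being attained. -/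
theorem support_radial_c_concave (m : ℕ) (Ω : Set (Euc m)) (hconv : Convex ℝ Ω)
    (hcomp : IsCompact Ω) (hint : (0 : Euc m) ∈ interior Ω) :
    ∀ φ ψ : Sph m → ℝ,
      (∀ n, φ n = Real.log (1 / suppFn Ω n)) → (∀ x, ψ x = Real.log (radial Ω x)) →
      (∀ x : Sph m,
        IsLeast (Set.range fun n : Sph m => costE n x - (φ n : EReal)) (ψ x : EReal)) ∧
      (∀ n : Sph m,
        IsLeast (Set.range fun x : Sph m => costE n x - (ψ x : EReal)) (φ n : EReal)) := by
  intro φ ψ hφ hψ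
  have hle (n x : Sph m) (hnx : 0 < ⟪(n : Euc m), x⟫) : φ n + ψ x ≤ -log ⟪(n : Euc m), x⟫ := by
    rw [hφ, hψ]
    refine log_one_div_add_log_le (radial_pos hcomp hint x) hnx ?_
    simpa only [real_inner_comm] using radial_mul_inner_le_suppFn hcomp (interior_subset hint) x n
  have heq (n x : Sph m) (h : radial Ω x * ⟪(x : Euc m), n⟫ = suppFn Ω n) :
      0 < ⟪(n : Euc m), x⟫ ∧ φ n + ψ x = -log ⟪(n : Euc m), x⟫ := by
    rw [real_inner_comm] at h
    have hnx : 0 < ⟪(n : Euc m), x⟫ :=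
      pos_of_mul_pos_right (h ▸ suppFn_pos hcomp hint n) (radial_pos hcomp hint x).le
    rw [hφ, hψ]
    exact ⟨hnx, log_one_div_add_log_eq (radial_pos hcomp hint x) hnx h⟩
  refine ⟨fun x => ⟨?_, ?_⟩, fun n => ⟨?_, ?_⟩⟩
  · obtain ⟨n, hn⟩ := exists_supporting_normal hconv hcomp hint x
    obtain ⟨hnx, h⟩ := heq n x hn
    exact ⟨n, costE_sub_eq hnx h⟩
  · rintro _ ⟨n, rfl⟩
    exact coe_le_costE_sub (hle n x)
  · obtain ⟨x, hx⟩ := exists_supported_point hcomp hint n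
    obtain ⟨hnx, h⟩ := heq n x hx
    exact ⟨x, costE_sub_eq hnx (by linarith)⟩
  · rintro _ ⟨x, rfl⟩
    exact coe_le_costE_sub fun hnx => by linarith [hle n x hnx]
end
end

section
/- If a Borel probability measure μ on S^m satisfies μ(ω) < σ(ω_{π/2}) for every nonempty closed spherically convex set ω ⊊ S^m (σ the uniform probability measure), then μ is not supported in any closed hemisphere; consequently sup_{x∈S^m} d(x, supp μ) < π/2. -/
open MeasureTheory Metric Set Real
open scoped ENNReal

noncomputable section

/-- the support of a measure on the sphere -/
def msupport {m : ℕ} (μ : Measure (Sph m)) : Set (Sph m) :=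
  {x | ∀ ε > (0 : ℝ), 0 < μ (Metric.ball x ε)}

/-! The closed hemisphere `{x | ⟪x, n⟫ ≤ 0}` is a nonempty, closed, spherically convex proper
subset of the sphere, so Alexandrov's condition gives it `μ`-mass `< 1`; hence the support of `μ`
meets every open hemisphere `{x | 0 < ⟪x, n⟫}`. Compactness of the sphere makes this uniform:
there is `c > 0` such that every `x` has a support point `y` with `⟪x, y⟫ ≥ c`, i.e. at geodesic
distance `≤ arccos c < π / 2`. -/

instance isProbabilityMeasure_unif (m : ℕ) : IsProbabilityMeasure (unif m) := by
  have : IsProbabilityMeasure (ProbabilityTheory.cond (volume : Measure (Euc m)).toSphere univ) :=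
    ProbabilityTheory.cond_isProbabilityMeasure (Measure.measure_univ_ne_zero.mpr (by simp))
  rwa [ProbabilityTheory.cond, Measure.restrict_univ] at this

theorem exists_pos_forall_exists_le {X ι : Type*} [TopologicalSpace X] [CompactSpace X]
    (f : ι → X → ℝ) (hf : ∀ i, Continuous (f i)) (hpos : ∀ x, ∃ i, 0 < f i x) :
    ∃ c > 0, ∀ x, ∃ i, c ≤ f i x := by
  let U : ℕ → Set X := fun k => ⋃ i, {x | 1 / ((k : ℝ) + 1) < f i x}
  have hU_open (k : ℕ) : IsOpen (U k) := isOpen_iUnion fun i => isOpen_lt continuous_const (hf i)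
  have hU_mono : Monotone U := fun k l hkl =>
    iUnion_mono fun i x (hx : _ < f i x) => (Nat.one_div_le_one_div hkl).trans_lt hx
  have hU_cover : univ ⊆ ⋃ k, U k := fun x _ => by
    obtain ⟨i, hi⟩ := hpos x
    obtain ⟨k, hk⟩ := exists_nat_one_div_lt hi
    exact mem_iUnion.2 ⟨k, mem_iUnion.2 ⟨i, hk⟩⟩
  obtain ⟨k, hk⟩ := isCompact_univ.elim_directed_cover U hU_open hU_cover hU_mono.directed_le
  refine ⟨1 / ((k : ℝ) + 1), by positivity, fun x => ?_⟩
  obtain ⟨i, hi⟩ := mem_iUnion.1 (hk (mem_univ x))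
  exact ⟨i, hi.le⟩

section

variable {m : ℕ}

def closedHemisphere (n : Sph m) : Set (Sph m) :=
  {x | inner ℝ (x : Euc m) (n : Euc m) ≤ 0}

theorem isClosed_closedHemisphere (n : Sph m) : IsClosed (closedHemisphere n) :=
  isClosed_le (by fun_prop) continuous_const

theorem neg_mem_closedHemisphere (n : Sph m) : -n ∈ closedHemisphere n := by
  simp [closedHemisphere, coe_neg_sphere, inner_neg_left]

theorem closedHemisphere_ne_univ (n : Sph m) : closedHemisphere n ≠ univ :=
  (ne_univ_iff_exists_notMem _).2 ⟨n, by simp [closedHemisphere]⟩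

theorem cone_closedHemisphere (n : Sph m) :
    cone (closedHemisphere n) = {y : Euc m | inner ℝ y (n : Euc m) ≤ 0} := by
  ext y
  constructor
  · rintro ⟨r, hr, x, hx, rfl⟩
    simpa only [mem_ofPred_eq, real_inner_smul_left] using mul_nonpos_of_nonneg_of_nonpos hr hx
  · intro hy
    rcases eq_or_ne y 0 with rfl | hy0
    · exact ⟨0, le_rfl, -n, neg_mem_closedHemisphere n, (zero_smul ℝ _).symm⟩
    · refine ⟨‖y‖, norm_nonneg y, ⟨‖y‖⁻¹ • y, ?_⟩, ?_, ?_⟩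
      · rw [mem_sphere_zero_iff_norm, norm_smul, norm_inv, norm_norm,
          inv_mul_cancel₀ (norm_ne_zero_iff.2 hy0)]
      · simpa only [closedHemisphere, mem_ofPred_eq, real_inner_smul_left]
          using mul_nonpos_of_nonneg_of_nonpos (inv_nonneg.2 (norm_nonneg y)) hy
      · simp [smul_smul, mul_inv_cancel₀ (norm_ne_zero_iff.2 hy0)]

theorem sphConvex_closedHemisphere (n : Sph m) : SphConvex (closedHemisphere n) := by
  rw [SphConvex, cone_closedHemisphere]
  exact convex_halfSpace_le
    ⟨fun x y => inner_add_left x y _, fun c x => real_inner_smul_left x _ c⟩ 0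

theorem measure_compl_msupport (μ : Measure (Sph m)) : μ (msupport μ)ᶜ = 0 := by
  refine measure_null_of_locally_null _ fun x hx => ?_
  obtain ⟨ε, hε, hμε⟩ : ∃ ε > (0 : ℝ), μ (ball x ε) ≤ 0 := by
    simpa [msupport] using hx
  exact ⟨ball x ε, nhdsWithin_le_nhds (ball_mem_nhds x hε), nonpos_iff_eq_zero.1 hμε⟩

theorem not_msupport_subset_of_measure_lt_one {μ : Measure (Sph m)} [IsProbabilityMeasure μ]
    {F : Set (Sph m)} (hF : IsClosed F) (hμF : μ F < 1) : ¬ msupport μ ⊆ F := fun hsub =>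
  hμF.ne <| (prob_compl_eq_zero_iff hF.measurableSet).1 <|
    measure_mono_null (compl_subset_compl.2 hsub) (measure_compl_msupport μ)

theorem not_msupport_subset_closedHemisphere (μ : Measure (Sph m)) [IsProbabilityMeasure μ]
    (halex : ∀ ω : Set (Sph m), ω.Nonempty → IsClosed ω → SphConvex ω → ω ≠ Set.univ →
      μ ω < unif m (nbhd ω (π / 2))) (n : Sph m) :
    ¬ msupport μ ⊆ closedHemisphere n := by
  refine not_msupport_subset_of_measure_lt_one (isClosed_closedHemisphere n) ?_
  exact (halex _ ⟨-n, neg_mem_closedHemisphere n⟩ (isClosed_closedHemisphere n)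
    (sphConvex_closedHemisphere n) (closedHemisphere_ne_univ n)).trans_le prob_le_one

end

/-- under Alexandrov's condition, `μ` is not supported in a closed
hemisphere, and every point is at geodesic distance `< π/2` from the support. -/
theorem not_supported_in_hemisphere (m : ℕ) (μ : Measure (Sph m))
    [IsProbabilityMeasure μ]
    (halex : ∀ ω : Set (Sph m), ω.Nonempty → IsClosed ω → SphConvex ω → ω ≠ Set.univ →
      μ ω < unif m (nbhd ω (π / 2))) :
    (∀ n : Sph m, ¬ (msupport μ ⊆ {x : Sph m | (inner ℝ (x : Euc m) (n : Euc m) : ℝ) ≤ 0})) ∧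
    ∃ r : ℝ, r < π / 2 ∧ ∀ x : Sph m, ∃ y ∈ msupport μ, gdist x y ≤ r := by
  have hsupp := not_msupport_subset_closedHemisphere μ halex
  refine ⟨hsupp, ?_⟩
  have hpos (x : Sph m) : ∃ y : msupport μ, 0 < inner ℝ (x : Euc m) (y : Euc m) := by
    obtain ⟨y, hy, hxy⟩ := not_subset.1 (hsupp x)
    exact ⟨⟨y, hy⟩, real_inner_comm (x : Euc m) y ▸ not_le.1 hxy⟩
  obtain ⟨c, hc, hcx⟩ := exists_pos_forall_exists_le
    (fun (y : msupport μ) (x : Sph m) => inner ℝ (x : Euc m) (y : Euc m))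
    (fun _ => by fun_prop) hpos
  refine ⟨arccos c, arccos_lt_pi_div_two.2 hc, fun x => ?_⟩
  obtain ⟨y, hy⟩ := hcx x
  exact ⟨y, y.2, arccos_le_arccos hy⟩
end
end

section
/- Any compact spherically convex subset ω ⊊ S^m is contained in a closed geodesic ball of radius π/2, and the full sphere S^m is an isolated point of the space 𝓒 of compact spherically convex sets with the Hausdorff metric. -/
open MeasureTheory Metric Set Real
open scoped ENNReal

noncomputable section

instance sph_nonempty (m : ℕ) : Nonempty (Sph m) :=
  ((NormedSpace.sphere_nonempty (x := (0 : Euc m))).mpr zero_le_one).to_subtype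

/-!
A proper compact spherically convex set `ω` misses some point `q`, which then lies outside the
cone generated by `ω`; this cone is convex and closed. A hyperplane separating `q` from the
cone can be taken through the origin, and its normal `p` puts `ω` in the closed hemisphere
`0 ≤ ⟪p, x⟫`. The antipode `-p` is then at chordal distance at least `1` from `ω`, so `ω` is
at Hausdorff distance at least `1` from the whole sphere.
-/

lemma norm_le_norm_add_of_inner_nonneg {E : Type*} [NormedAddCommGroup E]
    [InnerProductSpace ℝ E] {x y : E} (h : 0 ≤ inner ℝ x y) : ‖y‖ ≤ ‖x + y‖ := by
  rw [← pow_le_pow_iff_left₀ (norm_nonneg y) (norm_nonneg (x + y)) two_ne_zero,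
    norm_add_sq_real]
  nlinarith [sq_nonneg ‖x‖]

lemma le_hausdorffDist_univ {X : Type*} [PseudoMetricSpace X] [BoundedSpace X] {K : Set X}
    (hK : K.Nonempty) {q : X} {r : ℝ}
    (h : ∀ x ∈ K, r ≤ dist q x) : r ≤ hausdorffDist K univ := by
  rw [hausdorffDist_comm]
  calc r ≤ infDist q K := (le_infDist hK).2 h
    _ ≤ hausdorffDist univ K := infDist_le_hausdorffDist_of_mem (mem_univ q)
      (hausdorffEDist_ne_top_of_nonempty_of_bounded ⟨q, mem_univ q⟩ hK
        (Bornology.IsBounded.all _) (Bornology.IsBounded.all _))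

lemma one_le_dist_neg_of_inner_nonneg {m : ℕ} {p x : Sph m}
    (h : 0 ≤ inner ℝ (p : Euc m) (x : Euc m)) : 1 ≤ dist (-p) x := by
  rw [Subtype.dist_eq, coe_neg_sphere, dist_eq_norm, ← neg_add', norm_neg]
  simpa only [norm_eq_of_mem_sphere] using norm_le_norm_add_of_inner_nonneg h

section Cone

variable {m : ℕ}

open Filter Topology

lemma coe_mem_cone_iff {A : Set (Sph m)} {x : Sph m} : (x : Euc m) ∈ cone A ↔ x ∈ A := by
  refine ⟨?_, fun hx => ⟨1, zero_le_one, x, hx, (one_smul ℝ _).symm⟩⟩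
  rintro ⟨r, hr, y, hy, hxy⟩
  have hr1 : r = 1 := by
    simpa [norm_smul, abs_of_nonneg hr] using congrArg norm hxy.symm
  rw [hr1, one_smul] at hxy
  rwa [Subtype.ext hxy]

lemma smul_mem_cone {A : Set (Sph m)} {y : Euc m} (hy : y ∈ cone A) {c : ℝ} (hc : 0 ≤ c) :
    c • y ∈ cone A := by
  obtain ⟨r, hr, x, hx, rfl⟩ := hy
  exact ⟨c * r, mul_nonneg hc hr, x, hx, smul_smul c r _⟩

lemma zero_mem_cone {A : Set (Sph m)} (hA : A.Nonempty) : 0 ∈ cone A :=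
  let ⟨x, hx⟩ := hA
  ⟨0, le_rfl, x, hx, (zero_smul ℝ _).symm⟩

lemma isClosed_cone {ω : Set (Sph m)} (hω : IsCompact ω) : IsClosed (cone ω) := by
  refine isSeqClosed_iff_isClosed.mp fun y l hy hyl => ?_
  choose r hr x hx hyx using hy
  have hr_eq : ∀ n, r n = ‖y n‖ := fun n => by
    rw [hyx n, norm_smul, norm_eq_of_mem_sphere, mul_one, Real.norm_of_nonneg (hr n)]
  obtain ⟨a, ha, φ, hφ, hxa⟩ := hω.tendsto_subseq hx
  have hyl' := hyl.comp hφ.tendsto_atTop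
  have hra :
      Tendsto (fun n => r (φ n) • (x (φ n) : Euc m)) atTop (𝓝 (‖l‖ • (a : Euc m))) := by
    simp only [hr_eq]
    exact hyl'.norm.smul (continuous_subtype_val.tendsto a |>.comp hxa)
  refine ⟨‖l‖, norm_nonneg l, a, ha, tendsto_nhds_unique hyl' ?_⟩
  simpa only [Function.comp_def, hyx] using hra

lemma exists_forall_inner_nonneg_of_sphConvex {ω : Set (Sph m)} (hne : ω.Nonempty)
    (hc : IsCompact ω) (hconv : SphConvex ω) (hω : ω ≠ univ) :
    ∃ p : Sph m, ∀ x ∈ ω, 0 ≤ inner ℝ (p : Euc m) (x : Euc m) := by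
  obtain ⟨q, hq⟩ := (ne_univ_iff_exists_notMem ω).mp hω
  obtain ⟨f, u, hfq, hf⟩ := geometric_hahn_banach_point_closed hconv (isClosed_cone hc)
    (coe_mem_cone_iff.not.mpr hq)
  have hu : u < 0 := by simpa using hf 0 (zero_mem_cone hne)
  -- `f` is bounded below by `u < 0` on a cone, hence nonnegative on it
  have hf_nonneg : ∀ x ∈ ω, 0 ≤ f x := fun x hx => by
    by_contra! hfx
    have := hf _ (smul_mem_cone (coe_mem_cone_iff.mpr hx) (div_nonneg_of_nonpos hu.le hfx.le))
    rw [map_smul, smul_eq_mul, div_mul_cancel₀ u hfx.ne] at this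
    exact this.false
  set v := (InnerProductSpace.toDual ℝ (Euc m)).symm f
  have hv : ∀ w, inner ℝ v w = f w := fun w => InnerProductSpace.toDual_symm_apply
  have hv0 : v ≠ 0 := fun h => by
    have : f q = 0 := by rw [← hv, h, inner_zero_left]
    linarith
  refine ⟨⟨‖v‖⁻¹ • v, by simp [norm_smul, hv0]⟩, fun x hx => ?_⟩
  rw [real_inner_smul_left, hv]
  exact mul_nonneg (by positivity) (hf_nonneg x hx)

end Cone

/-- a proper compact spherically convex set lies in a closed ball of radius
`π/2`, and the full sphere is an isolated point of the space of spherically convex sets. -/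
theorem convex_in_halfsphere_and_univ_isolated (m : ℕ) :
    (∀ ω : Set (Sph m), ω.Nonempty → IsCompact ω → SphConvex ω → ω ≠ Set.univ →
      ∃ p : Sph m, ∀ x ∈ ω, gdist p x ≤ π / 2) ∧
    ∃ ε : ℝ, 0 < ε ∧ ∀ K : TopologicalSpace.NonemptyCompacts (Sph m),
      SphConvex (K : Set (Sph m)) →
      dist K (⟨⟨Set.univ, isCompact_univ⟩, Set.univ_nonempty⟩ :
        TopologicalSpace.NonemptyCompacts (Sph m)) < ε →
      (K : Set (Sph m)) = Set.univ := by
  refine ⟨fun ω hne hc hconv hω => ?_, 1, one_pos, fun K hK hdist => ?_⟩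
  · obtain ⟨p, hp⟩ := exists_forall_inner_nonneg_of_sphConvex hne hc hconv hω
    exact ⟨p, fun x hx => arccos_le_pi_div_two.mpr (hp x hx)⟩
  · by_contra hKu
    obtain ⟨p, hp⟩ := exists_forall_inner_nonneg_of_sphConvex K.nonempty K.isCompact hK hKu
    rw [NonemptyCompacts.dist_eq] at hdist
    exact hdist.not_ge <| le_hausdorffDist_univ K.nonempty
      fun x hx => one_le_dist_neg_of_inner_nonneg (hp x hx)
end
end

section
/- Let μ be a Borel probability measure on S^m satisfying Alexandrov's condition μ(ω) < σ(ω_{π/2}) for every nonempty compact spherically convex ω ⊊ S^m. Then there exists α > 0 such that for every nonempty compact set F ⊂ S^m, μ(F) ≤ σ(F_{π/2 − α}). -/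
open MeasureTheory Metric Set Real
open scoped ENNReal

noncomputable section

/-!
Suppose no margin works and pick nonempty compact `Fₙ` with
`σ((Fₙ)_{π/2 - 1/(n+1)}) < μ Fₙ`; let `K` be a cluster point of `(Fₙ)` in the Hausdorff metric.
Write `K(t) = {y | ∃ x ∈ K, t < ⟪y, x⟫}`, so that `K_r = K(cos r)`. Since
`cos (π/2 - ε) = sin ε ≤ ε` and `⟪y, ·⟫` is 1-Lipschitz, `K(t)` lies in `(Fₙ)_{π/2 - 1/(n+1)}`
whenever `Fₙ` is close to `K` and `n` is large, so `σ(K(t)) < μ Fₙ ≤ μ (K_ε-thickening)`;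
letting the thickening shrink to the closed set `K` and then `t → 0` gives `σ(K_{π/2}) ≤ μ K`.

If `K` lies in no closed hemisphere (its polar `K°` is empty), compactness of the sphere gives
`K(t) = S^m` for some `t > 0`, hence `σ((Fₙ)_{π/2 - 1/(n+1)}) = 1` for suitable `n`, which is
impossible. Otherwise the double polar `ω = K°°` is a proper, nonempty, compact, spherically
convex set containing `K`, and `ω_{π/2} ⊆ K_{π/2}` because `(K_{π/2})ᶜ = K° ⊆ K°°° = (ω_{π/2})ᶜ`.
Alexandrov's condition then gives `μ ω < σ(ω_{π/2}) ≤ μ K ≤ μ ω`.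
-/

open Filter Topology TopologicalSpace
open scoped RealInnerProductSpace

lemma le_measure_of_forall_le_measure_cthickening {α : Type*} [PseudoMetricSpace α]
    [MeasurableSpace α] [OpensMeasurableSpace α] {μ : Measure α} [IsFiniteMeasure μ]
    {s : Set α} (hs : IsClosed s) {a : ℝ≥0∞} (h : ∀ ε > 0, a ≤ μ (cthickening ε s)) :
    a ≤ μ s :=
  ge_of_tendsto ((tendsto_measure_cthickening_of_isClosed ⟨1, one_pos, measure_ne_top μ _⟩
    hs).mono_left nhdsWithin_le_nhds) (eventually_nhdsWithin_of_forall (s := Ioi 0) h)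

lemma NonemptyCompacts.subset_cthickening_of_dist_lt {α : Type*} [MetricSpace α]
    {s t : NonemptyCompacts α} {ε : ℝ} (h : dist s t < ε) :
    (s : Set α) ⊆ cthickening ε t := fun x hx =>
  let ⟨y, hy, hxy⟩ := exists_dist_lt_of_hausdorffDist_lt hx h (edist_ne_top s t)
  mem_cthickening_of_dist_le x y ε t hy hxy.le

lemma exists_one_div_lt_and_dist_lt {X : Type*} [PseudoMetricSpace X] {u : ℕ → X} {x : X}
    (hx : MapClusterPt x atTop u) {δ : ℝ} (hδ : 0 < δ) :
    ∃ n : ℕ, 1 / ((n : ℝ) + 1) < δ ∧ dist x (u n) < δ := by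
  have hsmall : ∀ᶠ n : ℕ in atTop, 1 / ((n : ℝ) + 1) < δ :=
    tendsto_one_div_add_atTop_nhds_zero_nat.eventually (gt_mem_nhds hδ)
  have hclose : ∃ᶠ n in atTop, u n ∈ ball x δ :=
    mapClusterPt_iff_frequently.1 hx _ (ball_mem_nhds x hδ)
  obtain ⟨n, hn_close, hn_small⟩ := (hclose.and_eventually hsmall).exists
  exact ⟨n, hn_small, by rwa [mem_ball, dist_comm] at hn_close⟩

lemma one_div_nat_add_one_lt_pi_div_two (n : ℕ) : 1 / ((n : ℝ) + 1) < π / 2 := by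
  have : 1 / ((n : ℝ) + 1) ≤ 1 := div_le_one_of_le₀ (by linarith [n.cast_nonneg (α := ℝ)])
    (by positivity)
  linarith [pi_gt_three]

namespace Sph

variable {m : ℕ}

lemma inner_mem_Icc (x y : Sph m) : ⟪(x : Euc m), y⟫ ∈ Icc (-1) 1 := by
  have h := abs_real_inner_le_norm (x : Euc m) y
  rw [norm_eq_of_mem_sphere x, norm_eq_of_mem_sphere y, mul_one] at h
  exact abs_le.mp h

lemma inner_self_eq_one (x : Sph m) : ⟪(x : Euc m), x⟫ = 1 := by
  rw [real_inner_self_eq_norm_sq, norm_eq_of_mem_sphere x, one_pow]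

lemma inner_sub_inner_le_dist (y x x' : Sph m) :
    ⟪(y : Euc m), x⟫ - ⟪(y : Euc m), x'⟫ ≤ dist x x' := by
  rw [← inner_sub_right, Subtype.dist_eq, dist_eq_norm]
  simpa only [norm_eq_of_mem_sphere y, one_mul] using real_inner_le_norm (y : Euc m) (x - x')

lemma cos_gdist (x y : Sph m) : cos (gdist x y) = ⟪(x : Euc m), y⟫ :=
  cos_arccos (inner_mem_Icc x y).1 (inner_mem_Icc x y).2

lemma gdist_lt_iff {x y : Sph m} {r : ℝ} (hr₀ : 0 < r) (hrπ : r ≤ π) :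
    gdist x y < r ↔ cos r < ⟪(x : Euc m), y⟫ := by
  have hg : gdist x y ∈ Icc 0 π := ⟨arccos_nonneg _, arccos_le_pi _⟩
  rw [← cos_gdist, strictAntiOn_cos.lt_iff_gt ⟨hr₀.le, hrπ⟩ hg]

def capUnion (K : Set (Sph m)) (t : ℝ) : Set (Sph m) :=
  {y | ∃ x ∈ K, t < ⟪(y : Euc m), x⟫}

lemma nbhd_eq_capUnion (K : Set (Sph m)) {r : ℝ} (hr₀ : 0 < r) (hrπ : r ≤ π) :
    nbhd K r = capUnion K (cos r) := by
  ext y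
  simp only [nbhd, capUnion, mem_ofPred_eq, gdist_lt_iff hr₀ hrπ]

lemma isOpen_capUnion (K : Set (Sph m)) (t : ℝ) : IsOpen (capUnion K t) := by
  have : capUnion K t = ⋃ x ∈ K, {y : Sph m | t < ⟪(y : Euc m), x⟫} := by
    ext y
    simp [capUnion]
  rw [this]
  exact isOpen_biUnion fun x _ =>
    isOpen_lt continuous_const (continuous_subtype_val.inner continuous_const)

lemma capUnion_antitone (K : Set (Sph m)) : Antitone (capUnion K) :=
  fun _ _ hst _ ⟨x, hx, hxt⟩ => ⟨x, hx, hst.trans_lt hxt⟩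

lemma monotone_capUnion_one_div (K : Set (Sph m)) :
    Monotone fun n : ℕ => capUnion K (1 / ((n : ℝ) + 1)) :=
  fun _ _ h => capUnion_antitone K (by gcongr)

lemma iUnion_capUnion_one_div (K : Set (Sph m)) :
    ⋃ n : ℕ, capUnion K (1 / ((n : ℝ) + 1)) = capUnion K 0 := by
  refine (iUnion_subset fun n => capUnion_antitone K (by positivity)).antisymm ?_
  rintro y ⟨x, hx, hpos⟩
  obtain ⟨n, hn⟩ := exists_nat_one_div_lt hpos
  exact mem_iUnion.2 ⟨n, x, hx, hn⟩

lemma compl_capUnion_zero (K : Set (Sph m)) : (capUnion K 0)ᶜ = spolar K := by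
  ext y
  simp [capUnion, spolar]

lemma exists_capUnion_eq_univ {K : Set (Sph m)} (hK : spolar K = ∅) :
    ∃ n : ℕ, capUnion K (1 / ((n : ℝ) + 1)) = univ := by
  have hcover : (univ : Set (Sph m)) ⊆ ⋃ n : ℕ, capUnion K (1 / ((n : ℝ) + 1)) := by
    rw [iUnion_capUnion_one_div, ← compl_compl (capUnion K 0), compl_capUnion_zero, hK,
      compl_empty]
  obtain ⟨n, hn⟩ := isCompact_univ.elim_directed_cover _ (fun n => isOpen_capUnion K _) hcover
    (monotone_capUnion_one_div K).directed_le
  exact ⟨n, univ_subset_iff.1 hn⟩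

lemma capUnion_subset_nbhd {K F : NonemptyCompacts (Sph m)} {δ ε t : ℝ} (hKF : dist K F < δ)
    (hε₀ : 0 ≤ ε) (hε : ε < π / 2) (ht : δ + ε ≤ t) :
    capUnion K t ⊆ nbhd (F : Set (Sph m)) (π / 2 - ε) := by
  rintro y ⟨x, hxK, hxt⟩
  obtain ⟨x', hx'F, hxx'⟩ := exists_dist_lt_of_hausdorffDist_lt hxK hKF (edist_ne_top K F)
  rw [nbhd_eq_capUnion _ (by linarith) (by linarith [pi_pos]), cos_pi_div_two_sub]
  exact ⟨x', hx'F, by linarith [inner_sub_inner_le_dist y x x', sin_le hε₀]⟩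

lemma isClosed_spolar (S : Set (Sph m)) : IsClosed (spolar S) := by
  have : spolar S = ⋂ x ∈ S, {y : Sph m | ⟪(y : Euc m), x⟫ ≤ 0} := by
    ext y
    simp [spolar]
  rw [this]
  exact isClosed_biInter fun x _ =>
    isClosed_le (continuous_subtype_val.inner continuous_const) continuous_const

lemma subset_spolar_spolar (S : Set (Sph m)) : S ⊆ spolar (spolar S) :=
  fun x hx y hy => real_inner_comm (x : Euc m) y ▸ hy x hx

lemma spolar_ne_univ {S : Set (Sph m)} (hS : S.Nonempty) : spolar S ≠ univ := by
  obtain ⟨x, hx⟩ := hS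
  intro h
  have := (h ▸ mem_univ x : x ∈ spolar S) x hx
  rw [inner_self_eq_one] at this
  norm_num at this

lemma mem_cone_spolar {S : Set (Sph m)} {v : Euc m} (hv : ∀ x ∈ S, ⟪v, (x : Euc m)⟫ ≤ 0)
    (hv₀ : v ≠ 0) : v ∈ cone (spolar S) := by
  have hn : ‖v‖ ≠ 0 := norm_ne_zero_iff.2 hv₀
  let u : Sph m := ⟨‖v‖⁻¹ • v, by simp [norm_smul, hn]⟩
  refine ⟨‖v‖, norm_nonneg v, u, fun x hx => ?_, (smul_inv_smul₀ hn v).symm⟩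
  rw [real_inner_smul_left]
  exact mul_nonpos_of_nonneg_of_nonpos (by positivity) (hv x hx)

lemma sphConvex_spolar (S : Set (Sph m)) : SphConvex (spolar S) := by
  rintro _ ⟨r₁, hr₁, z₁, hz₁, rfl⟩ _ ⟨r₂, hr₂, z₂, hz₂, rfl⟩ a b ha hb -
  by_cases hv₀ : a • r₁ • (z₁ : Euc m) + b • r₂ • (z₂ : Euc m) = 0
  · exact ⟨0, le_rfl, z₁, hz₁, by rw [hv₀, zero_smul]⟩
  refine mem_cone_spolar (fun x hx => ?_) hv₀
  simp only [inner_add_left, real_inner_smul_left]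
  exact add_nonpos
    (mul_nonpos_of_nonneg_of_nonpos ha (mul_nonpos_of_nonneg_of_nonpos hr₁ (hz₁ x hx)))
    (mul_nonpos_of_nonneg_of_nonpos hb (mul_nonpos_of_nonneg_of_nonpos hr₂ (hz₂ x hx)))

lemma capUnion_spolar_spolar_zero_subset (S : Set (Sph m)) :
    capUnion (spolar (spolar S)) 0 ⊆ capUnion S 0 := by
  rw [← compl_subset_compl, compl_capUnion_zero, compl_capUnion_zero]
  exact subset_spolar_spolar (spolar S)

end Sph

instance (m : ℕ) : Nonempty (Sph m) := (NormedSpace.sphere_nonempty.2 zero_le_one).coe_sort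

instance (m : ℕ) : IsProbabilityMeasure (unif m) := by
  unfold unif
  infer_instance

def ViolatesMargins {m : ℕ} (μ : Measure (Sph m)) (F : ℕ → NonemptyCompacts (Sph m)) : Prop :=
  ∀ n : ℕ, unif m (nbhd (F n : Set (Sph m)) (π / 2 - 1 / ((n : ℝ) + 1))) < μ (F n)

section ClusterPoint

variable {m : ℕ} {μ : Measure (Sph m)} {F : ℕ → NonemptyCompacts (Sph m)}
  {K : NonemptyCompacts (Sph m)}

lemma unif_capUnion_le [IsFiniteMeasure μ] (hbad : ViolatesMargins μ F)
    (hK : MapClusterPt K atTop F) {t : ℝ} (ht : 0 < t) :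
    unif m (Sph.capUnion K t) ≤ μ K := by
  refine le_measure_of_forall_le_measure_cthickening K.isCompact.isClosed fun ε hε => ?_
  obtain ⟨n, hn, hdist⟩ := exists_one_div_lt_and_dist_lt hK (lt_min (half_pos ht) hε)
  calc unif m (Sph.capUnion K t)
      ≤ unif m (nbhd (F n : Set (Sph m)) (π / 2 - 1 / ((n : ℝ) + 1))) :=
        measure_mono <| Sph.capUnion_subset_nbhd (δ := t / 2) (hdist.trans_le (min_le_left _ _))
          (by positivity) (one_div_nat_add_one_lt_pi_div_two n)
          (by linarith [min_le_left (t / 2) ε])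
    _ ≤ μ (F n) := (hbad n).le
    _ ≤ μ (cthickening ε K) := measure_mono <| NonemptyCompacts.subset_cthickening_of_dist_lt <|
        by rw [dist_comm]; exact hdist.trans_le (min_le_right _ _)

lemma unif_capUnion_zero_le [IsFiniteMeasure μ] (hbad : ViolatesMargins μ F)
    (hK : MapClusterPt K atTop F) :
    unif m (Sph.capUnion K 0) ≤ μ K := by
  rw [← Sph.iUnion_capUnion_one_div, (Sph.monotone_capUnion_one_div _).measure_iUnion]
  exact iSup_le fun n => unif_capUnion_le hbad hK (by positivity)

lemma spolar_nonempty_of_mapClusterPt [IsProbabilityMeasure μ] (hbad : ViolatesMargins μ F)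
    (hK : MapClusterPt K atTop F) :
    (spolar (K : Set (Sph m))).Nonempty := by
  by_contra hempty
  obtain ⟨n₀, hn₀⟩ := Sph.exists_capUnion_eq_univ (not_nonempty_iff_eq_empty.1 hempty)
  set t := 1 / ((n₀ : ℝ) + 1)
  obtain ⟨n, hn, hdist⟩ := exists_one_div_lt_and_dist_lt hK (half_pos (by positivity : 0 < t))
  have huniv : nbhd (F n : Set (Sph m)) (π / 2 - 1 / ((n : ℝ) + 1)) = univ :=
    univ_subset_iff.1 <| hn₀ ▸ Sph.capUnion_subset_nbhd (δ := t / 2) hdist (by positivity)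
      (one_div_nat_add_one_lt_pi_div_two n) (by linarith)
  exact (hbad n).not_ge (by rw [huniv, measure_univ]; exact prob_le_one)

end ClusterPoint

/-- reinforcement of Alexandrov's condition: uniform safety margin `α`. -/
theorem alexandrov_reinforced_margin (m : ℕ) (μ : Measure (Sph m))
    [IsProbabilityMeasure μ]
    (halex : ∀ ω : Set (Sph m), ω.Nonempty → IsCompact ω → SphConvex ω → ω ≠ Set.univ →
      μ ω < unif m (nbhd ω (π / 2))) :
    ∃ α : ℝ, 0 < α ∧
      ∀ F : Set (Sph m), F.Nonempty → IsCompact F →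
        μ F ≤ unif m (nbhd F (π / 2 - α)) := by
  by_contra! hcon
  obtain ⟨F, hbad⟩ : ∃ F, ViolatesMargins μ F := by
    choose F hFne hFc hbad using fun n : ℕ => hcon (1 / ((n : ℝ) + 1)) (by positivity)
    exact ⟨fun n => ⟨⟨F n, hFc n⟩, hFne n⟩, hbad⟩
  obtain ⟨K, hK⟩ := exists_clusterPt_of_compactSpace (map F atTop)
  set ω := spolar (spolar (K : Set (Sph m)))
  have hω : μ ω < unif m (nbhd ω (π / 2)) :=
    halex ω (K.nonempty.mono (Sph.subset_spolar_spolar _)) (Sph.isClosed_spolar _).isCompact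
      (Sph.sphConvex_spolar _) (Sph.spolar_ne_univ (spolar_nonempty_of_mapClusterPt hbad hK))
  refine hω.not_ge ?_
  calc unif m (nbhd ω (π / 2)) = unif m (Sph.capUnion ω 0) := by
        rw [Sph.nbhd_eq_capUnion _ (by positivity) (by linarith [pi_pos]), cos_pi_div_two]
    _ ≤ unif m (Sph.capUnion K 0) := measure_mono (Sph.capUnion_spolar_spolar_zero_subset _)
    _ ≤ μ K := unif_capUnion_zero_le hbad hK
    _ ≤ μ ω := measure_mono (Sph.subset_spolar_spolar _)
end
end

section
/- Let c be the cost c(n,x) = -log⟨n,x⟩ for ⟨n,x⟩ > 0 and +∞ otherwise on S^m × S^m. Let ψ : S^m → ℝ ∪ {−∞} be upper semicontinuous such that for every x ∈ S^m, the open ball B(x,π/2) meets {ψ > −∞} in a set of positive uniform measure. Then the c-transform ψ^c(n) = inf_{x∈S^m}(c(n,x) − ψ(x)) is real-valued and Lipschitz on S^m, the infimum is attained for each n, and ψ^{cc} ≥ ψ. -/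
open MeasureTheory Metric Set Real
open scoped ENNReal

noncomputable section

/-!
Put `a = exp ∘ ψ` (so `a = 0` where `ψ = -∞`). Since `c(n,x) - ψ(x) = -log (a(x) ⟨x,n⟩₊)`, the
`c`-transform is `ψ^c = -log h` with `h(n) = sup_x a(x) ⟨x,n⟩₊`, the support function of the star
body with radial function `a`. As a supremum of `(max a)`-Lipschitz functions of `n`, `h` is
Lipschitz; the supremum is attained because `a` is upper semicontinuous on the compact sphere; and
`h > 0` because every `n` sees some `z` with `⟨z,n⟩ > 0` and `ψ(z) > -∞`. Hence `h` is bounded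
below by a positive constant on the compact sphere and `-log h` is Lipschitz. Finally `ψ^{cc} ≥ ψ`
is just `ψ(x) + ψ^c(n) ≤ c(n,x)` read the other way.
-/

section Semicontinuity

variable {X : Type*} [TopologicalSpace X]

theorem UpperSemicontinuous.mul_of_nonneg {a c : X → ℝ} (ha : UpperSemicontinuous a)
    (ha₀ : ∀ x, 0 ≤ a x) (hc : UpperSemicontinuous c) (hc₀ : ∀ x, 0 ≤ c x) :
    UpperSemicontinuous fun x => a x * c x := by
  intro x₀ y hy
  obtain ⟨ε, hε, hεy⟩ : ∃ ε > 0, (a x₀ + ε) * (c x₀ + ε) < y := by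
    have hcont : ContinuousAt (fun ε : ℝ => (a x₀ + ε) * (c x₀ + ε)) 0 := by fun_prop
    exact (hcont.eventually (Iio_mem_nhds (by simpa using hy))).exists_gt
  filter_upwards [ha x₀ _ (lt_add_of_pos_right _ hε), hc x₀ _ (lt_add_of_pos_right _ hε)]
    with x hax hcx
  exact (mul_lt_mul'' hax hcx (ha₀ x) (hc₀ x)).trans hεy

theorem UpperSemicontinuous.toReal_exp {f : X → EReal} (hf : UpperSemicontinuous f)
    (htop : ∀ x, f x ≠ ⊤) : UpperSemicontinuous fun x => (EReal.exp (f x)).toReal := by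
  intro x₀ y hy
  have hexp : UpperSemicontinuous fun x => EReal.exp (f x) :=
    ENNReal.continuous_exp.comp_upperSemicontinuous hf EReal.exp_monotone
  filter_upwards [hexp x₀ _ ((ENNReal.lt_ofReal_iff_toReal_lt (by simpa using htop x₀)).2 hy)]
    with x hx
  exact ENNReal.toReal_lt_of_lt_ofReal hx

end Semicontinuity

section Lipschitz

variable {α : Type*} [PseudoMetricSpace α]

theorem LipschitzWith.ciSup {ι : Type*} [Nonempty ι] {F : ι → α → ℝ} {K : NNReal}
    (hF : ∀ i, LipschitzWith K (F i)) (hbdd : ∀ x, BddAbove (range fun i => F i x)) :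
    LipschitzWith K fun x => ⨆ i, F i x :=
  LipschitzWith.of_le_add_mul K fun x y =>
    ciSup_le fun i => ((hF i).le_add_mul x y).trans (by gcongr; exact le_ciSup (hbdd y) i)

theorem LipschitzWith.log_of_le {f : α → ℝ} {K : NNReal} {δ : ℝ} (hf : LipschitzWith K f)
    (hδ : 0 < δ) (hfδ : ∀ x, δ ≤ f x) :
    LipschitzWith (K / δ.toNNReal) fun x => Real.log (f x) := by
  refine LipschitzWith.of_le_add_mul _ fun x y => ?_
  have hy : 0 < f y := hδ.trans_le (hfδ y)
  have hlog : Real.log (f x) - Real.log (f y) ≤ (f x - f y) / f y := by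
    rw [← Real.log_div (hδ.trans_le (hfδ x)).ne' hy.ne', sub_div, div_self hy.ne']
    exact Real.log_le_sub_one_of_pos (div_pos (hδ.trans_le (hfδ x)) hy)
  have hdiff : (f x - f y) / f y ≤ K * dist x y / δ := by
    rcases le_or_gt (f x - f y) 0 with hxy | hxy
    · exact (div_nonpos_of_nonpos_of_nonneg hxy hy.le).trans (by positivity)
    · calc (f x - f y) / f y ≤ K * dist x y / f y := by
            gcongr; exact (le_abs_self _).trans (hf.dist_le_mul x y)
        _ ≤ K * dist x y / δ := by gcongr; exact hfδ y
  rw [NNReal.coe_div, Real.coe_toNNReal _ hδ.le]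
  linarith [show K * dist x y / δ = K / δ * dist x y by ring]

end Lipschitz

theorem EReal.le_sub_of_coe_le_sub {r : ℝ} {b c : EReal} (hb : b ≠ ⊤) (hc : c ≠ ⊥)
    (h : (r : EReal) ≤ c - b) : b ≤ c - r := by
  rw [EReal.le_sub_iff_add_le (.inr hc) (.inl hb)] at h
  rw [EReal.le_sub_iff_add_le (.inl (EReal.coe_ne_bot r)) (.inl (EReal.coe_ne_top r)), add_comm]
  exact h

instance inst_s18 (m : ℕ) : Nonempty (Sph m) :=
  (NormedSpace.sphere_nonempty.mpr zero_le_one).coe_sort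

theorem costE_eq_neg_log {m : ℕ} (n x : Sph m) :
    costE n x = -ENNReal.log (ENNReal.ofReal (inner ℝ (n : Euc m) (x : Euc m))) := by
  unfold costE
  split_ifs with h
  · rw [ENNReal.log_ofReal_of_pos h, EReal.coe_neg]
  · rw [ENNReal.ofReal_of_nonpos (not_lt.1 h), ENNReal.log_zero, EReal.neg_bot]

theorem costE_ne_bot {m : ℕ} (n x : Sph m) : costE n x ≠ ⊥ := by
  unfold costE; split_ifs <;> simp

section Transform

variable {m : ℕ}

def expPairing (ψ : Sph m → EReal) (n x : Sph m) : ℝ :=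
  (EReal.exp (ψ x)).toReal * max (inner ℝ (x : Euc m) (n : Euc m)) 0

def expSupport (ψ : Sph m → EReal) (n : Sph m) : ℝ :=
  ⨆ x, expPairing ψ n x

variable {ψ : Sph m → EReal}

theorem costE_sub_eq_neg_log_expPairing (htop : ∀ x, ψ x ≠ ⊤) (n x : Sph m) :
    costE n x - ψ x = -ENNReal.log (ENNReal.ofReal (expPairing ψ n x)) := by
  have hlog_ne_top : ENNReal.log (ENNReal.ofReal (inner ℝ (n : Euc m) (x : Euc m))) ≠ ⊤ :=
    ENNReal.log_eq_top_iff.not.2 ENNReal.ofReal_ne_top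
  rw [expPairing, ENNReal.ofReal_mul ENNReal.toReal_nonneg,
    ENNReal.ofReal_toReal (by simpa using htop x), ENNReal.ofReal_max, ENNReal.ofReal_zero,
    max_eq_left zero_le, ENNReal.log_mul_add, EReal.log_exp, real_inner_comm,
    EReal.neg_add (.inr hlog_ne_top) (.inl (htop x)), costE_eq_neg_log,
    sub_eq_add_neg, sub_eq_add_neg, add_comm]

theorem upperSemicontinuous_expPairing (husc : UpperSemicontinuous ψ) (htop : ∀ x, ψ x ≠ ⊤)
    (n : Sph m) : UpperSemicontinuous (expPairing ψ n) := by
  have hcont : Continuous fun x : Sph m => max (inner ℝ (x : Euc m) (n : Euc m)) 0 := by fun_prop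
  exact (husc.toReal_exp htop).mul_of_nonneg (fun _ => ENNReal.toReal_nonneg)
    hcont.upperSemicontinuous fun _ => le_max_right _ _

theorem isGreatest_expSupport (husc : UpperSemicontinuous ψ) (htop : ∀ x, ψ x ≠ ⊤)
    (n : Sph m) : IsGreatest (range (expPairing ψ n)) (expSupport ψ n) := by
  obtain ⟨x₀, -, hx₀⟩ := (upperSemicontinuous_expPairing husc htop n).upperSemicontinuousOn univ
    |>.exists_isMaxOn univ_nonempty isCompact_univ
  have hgreatest : IsGreatest (range (expPairing ψ n)) (expPairing ψ n x₀) :=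
    ⟨⟨x₀, rfl⟩, by rintro _ ⟨x, rfl⟩; exact hx₀ (mem_univ x)⟩
  rwa [expSupport, iSup, hgreatest.csSup_eq]

theorem lipschitzWith_expPairing (x : Sph m) :
    LipschitzWith (EReal.exp (ψ x)).toNNReal fun n => expPairing ψ n x := by
  refine LipschitzWith.of_dist_le_mul fun n n' => ?_
  rw [ENNReal.coe_toNNReal_eq_toReal, Real.dist_eq, expPairing, expPairing, ← mul_sub,
    abs_mul, abs_of_nonneg ENNReal.toReal_nonneg]
  gcongr
  calc |max (inner ℝ (x : Euc m) n) 0 - max (inner ℝ (x : Euc m) n') 0|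
      ≤ |inner ℝ (x : Euc m) ((n : Euc m) - n')| := by
        rw [inner_sub_right]; exact abs_max_sub_max_le_abs _ _ _
    _ ≤ ‖(x : Euc m)‖ * ‖(n : Euc m) - n'‖ := abs_real_inner_le_norm _ _
    _ = dist n n' := by rw [norm_eq_of_mem_sphere x, one_mul, ← dist_eq_norm, Subtype.dist_eq]

theorem exists_lipschitzWith_expSupport (husc : UpperSemicontinuous ψ) (htop : ∀ x, ψ x ≠ ⊤) :
    ∃ K, LipschitzWith K (expSupport ψ) := by
  obtain ⟨x₀, -, hx₀⟩ :=
    (husc.upperSemicontinuousOn univ).exists_isMaxOn univ_nonempty isCompact_univ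
  refine ⟨(EReal.exp (ψ x₀)).toNNReal, LipschitzWith.ciSup (fun x => ?_)
    fun n => (isGreatest_expSupport husc htop n).bddAbove⟩
  refine (lipschitzWith_expPairing x).weaken (ENNReal.toNNReal_mono ?_ ?_)
  · simpa using htop x₀
  · exact EReal.exp_monotone (hx₀ (mem_univ x))

theorem expSupport_pos (husc : UpperSemicontinuous ψ) (htop : ∀ x, ψ x ≠ ⊤) {n z : Sph m}
    (hz : 0 < inner ℝ (z : Euc m) (n : Euc m)) (hψz : ⊥ < ψ z) : 0 < expSupport ψ n := by
  have hexp : 0 < (EReal.exp (ψ z)).toReal :=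
    ENNReal.toReal_pos (by simpa using hψz.ne') (by simpa using htop z)
  exact (mul_pos hexp (lt_max_of_lt_left hz)).trans_le
    ((isGreatest_expSupport husc htop n).2 ⟨z, rfl⟩)

theorem isLeast_costE_sub (husc : UpperSemicontinuous ψ) (htop : ∀ x, ψ x ≠ ⊤) {n : Sph m}
    (hn : 0 < expSupport ψ n) :
    IsLeast (range fun x => costE n x - ψ x) ((-Real.log (expSupport ψ n) : ℝ) : EReal) := by
  have hanti : Antitone fun t : ℝ => -ENNReal.log (ENNReal.ofReal t) :=
    fun s t hst => EReal.neg_le_neg_iff.2 (ENNReal.log_monotone (ENNReal.ofReal_le_ofReal hst))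
  have := hanti.map_isGreatest (isGreatest_expSupport husc htop n)
  simp_rw [costE_sub_eq_neg_log_expPairing htop]
  rwa [← range_comp, ENNReal.log_ofReal_of_pos hn, ← EReal.coe_neg] at this

end Transform

/-- regularity of the `c`-transform: `ψ^c` is real-valued and Lipschitz,
the infimum is attained, and `ψ^{cc} ≥ ψ`. -/
theorem c_transform_lipschitz (m : ℕ) (ψ : Sph m → EReal)
    (htop : ∀ x, ψ x ≠ ⊤) (husc : UpperSemicontinuous ψ)
    (hpos : ∀ x : Sph m, 0 < unif m {z : Sph m | gdist z x < π / 2 ∧ ⊥ < ψ z}) :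
    ∃ f : Sph m → ℝ,
      (∃ K : NNReal, LipschitzWith K f) ∧
      (∀ n : Sph m,
        IsLeast (Set.range fun x : Sph m => costE n x - ψ x) (f n : EReal)) ∧
      (∀ x : Sph m, ψ x ≤ ⨅ n : Sph m, (costE n x - (f n : EReal))) := by
  have hg_pos : ∀ n, 0 < expSupport ψ n := fun n => by
    obtain ⟨z, hz, hψz⟩ := nonempty_of_measure_ne_zero (hpos n).ne'
    exact expSupport_pos husc htop (arccos_lt_pi_div_two.1 hz) hψz
  obtain ⟨K, hK⟩ := exists_lipschitzWith_expSupport husc htop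
  obtain ⟨n₀, -, hn₀⟩ := isCompact_univ.exists_isMinOn univ_nonempty hK.continuous.continuousOn
  have hleast n := isLeast_costE_sub husc htop (hg_pos n)
  refine ⟨fun n => -Real.log (expSupport ψ n),
    ⟨_, (hK.log_of_le (hg_pos n₀) fun n => hn₀ (mem_univ n)).neg⟩, hleast,
    fun x => le_iInf fun n => ?_⟩
  exact EReal.le_sub_of_coe_le_sub (htop x) (costE_ne_bot n x) ((hleast n).2 ⟨x, rfl⟩)
end
end
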